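/- Let Γ be a restricted-normal digraph of order n with adjacency matrix A (i.e., its Laplacian L is not a normal matrix but QᴴLQ is normal for a restrictor matrix Q of order n). For k ≥ 1, let Γ̂ be the digraph of order nk on vertex set Fin n × Fin k whose adjacency matrix is the Kronecker product Â = A ⊗ J_k, i.e. Â (i,p) (j,q) = A i j for all p, q ∈ Fin k. Then Γ̂ is restricted-normal: its Laplacian L̂ is not normal but Q̂ᴴL̂Q̂ is normal for a restrictor matrix Q̂ of order nk. Furthermore, Γ̂ is a directed join if and only if Γ is a directed join. -/

import Mathlib

open Matrix

/-- A 0/1 adjacency matrix with zero diagonal. -/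
def IsAdj {m : Type*} [Fintype m] (A : Matrix m m ℝ) : Prop :=
  (∀ i j, A i j = 0 ∨ A i j = 1) ∧ ∀ i, A i i = 0

/-- Laplacian of a digraph: `L i i = d⁺(i)` and `L i j = -A i j` for `i ≠ j`. -/
noncomputable def lap {m : Type*} [Fintype m] [DecidableEq m] (A : Matrix m m ℝ) :
    Matrix m m ℝ :=
  Matrix.diagonal (fun i => ∑ j, A i j) - A

/-- Complexified Laplacian. -/
noncomputable def lapC {m : Type*} [Fintype m] [DecidableEq m] (A : Matrix m m ℝ) :
    Matrix m m ℂ :=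
  (lap A).map (fun x => (x : ℂ))

/-- Restricted numerical range `W_r(M) = { xᴴ M x : ‖x‖ = 1, xᴴ e = 0 }`. -/
noncomputable def rnr {m : Type*} [Fintype m] (M : Matrix m m ℂ) : Set ℂ :=
  { z | ∃ x : EuclideanSpace ℂ m, ‖x‖ = 1 ∧ star (x : m → ℂ) ⬝ᵥ (fun _ => (1 : ℂ)) = 0 ∧
      z = star (x : m → ℂ) ⬝ᵥ M.mulVec (x : m → ℂ) }

/-- Restrictor matrix: orthonormal columns, all orthogonal to the all-ones vector. -/
def IsRestrictor {m k : Type*} [Fintype m] [Fintype k] [DecidableEq k]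
    (Q : Matrix m k ℂ) : Prop :=
  Qᴴ * Q = 1 ∧ Qᴴ *ᵥ (fun _ => (1 : ℂ)) = 0

/-- Normal matrix: `Mᴴ M = M Mᴴ` (for real matrices, `Mᵀ M = M Mᵀ`). -/
def IsNormalM {m R : Type*} [Fintype m] [Mul (Matrix m m R)] [Star (Matrix m m R)]
    (M : Matrix m m R) : Prop := star M * M = M * star M

/-- Balanced digraph: `d⁺(i) = d⁻(i)` for every vertex. -/
def Bal {m : Type*} [Fintype m] (A : Matrix m m ℝ) : Prop :=
  ∀ i, ∑ j, A i j = ∑ j, A j i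

/-
The Laplacian of the blow-up is `L̂ = k (D ⊗ E + L ⊗ G)`, where `D` is the out-degree matrix of
`Γ`, `G = J_k / k` (`avgMatrix`) is the orthogonal projection of `ℂ^k` onto the constants and
`E = 1 - G` (`centeringMatrix`). Since `E` and `G` are complementary orthogonal projections,
`(X, Y) ↦ X ⊗ E + Y ⊗ G` (`kroneckerSplit`) is a `*`-homomorphism, injective in `Y`; so `L̂`
normal would force `L` normal.

For a restrictor `Q` of order `n`, `Q Qᴴ = C := 1 - J_n / n`, so `Qᴴ M Q` is normal iff
`C (Mᴴ C M - M C Mᴴ) C = 0`, a condition that does not depend on `Q`. The centering matrix of the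
blow-up is `1 ⊗ E + C ⊗ G`, and `D` is normal, so the condition for `L` gives it for `L̂`.

Because `A` has no loops, a directed join of the blow-up is a union of fibres `{i} × Fin k`, so it
is the blow-up of a directed join of `Γ`.
-/

open Kronecker

section KroneckerSplit

variable {m ι 𝕜 : Type*} [Fintype ι] [Field 𝕜]

variable (ι) in
def avgMatrix : Matrix ι ι 𝕜 := (Fintype.card ι : 𝕜)⁻¹ • of fun _ _ => 1

variable (ι) in
def centeringMatrix [DecidableEq ι] : Matrix ι ι 𝕜 := 1 - avgMatrix ι

theorem avgMatrix_mul_self [CharZero 𝕜] [Nonempty ι] :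
    avgMatrix ι * avgMatrix ι = (avgMatrix ι : Matrix ι ι 𝕜) := by
  ext i j
  simp [avgMatrix, mul_apply]

theorem conjTranspose_avgMatrix [StarRing 𝕜] : (avgMatrix ι : Matrix ι ι 𝕜)ᴴ = avgMatrix ι := by
  ext i j
  simp [avgMatrix]

theorem avgMatrix_prod [Fintype m] :
    (avgMatrix (m × ι) : Matrix _ _ 𝕜) = avgMatrix m ⊗ₖ avgMatrix ι := by
  ext ⟨i, p⟩ ⟨j, q⟩
  simp [avgMatrix, mul_comm]

variable [DecidableEq ι]

theorem centeringMatrix_mul_avgMatrix [CharZero 𝕜] [Nonempty ι] :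
    centeringMatrix ι * avgMatrix ι = (0 : Matrix ι ι 𝕜) := by
  rw [centeringMatrix, sub_mul, one_mul, avgMatrix_mul_self, sub_self]

theorem avgMatrix_mul_centeringMatrix [CharZero 𝕜] [Nonempty ι] :
    avgMatrix ι * centeringMatrix ι = (0 : Matrix ι ι 𝕜) := by
  rw [centeringMatrix, mul_sub, mul_one, avgMatrix_mul_self, sub_self]

theorem centeringMatrix_mul_self [CharZero 𝕜] [Nonempty ι] :
    centeringMatrix ι * centeringMatrix ι = (centeringMatrix ι : Matrix ι ι 𝕜) := by
  nth_rw 1 [centeringMatrix]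
  rw [sub_mul, one_mul, avgMatrix_mul_centeringMatrix, sub_zero]

theorem conjTranspose_centeringMatrix [StarRing 𝕜] :
    (centeringMatrix ι : Matrix ι ι 𝕜)ᴴ = centeringMatrix ι := by
  rw [centeringMatrix, conjTranspose_sub, conjTranspose_one, conjTranspose_avgMatrix]

variable (ι) in
def kroneckerSplit (X Y : Matrix m m 𝕜) : Matrix (m × ι) (m × ι) 𝕜 :=
  X ⊗ₖ centeringMatrix ι + Y ⊗ₖ avgMatrix ι

theorem kroneckerSplit_mul_kroneckerSplit [Fintype m] [CharZero 𝕜] [Nonempty ι]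
    (X Y X' Y' : Matrix m m 𝕜) :
    kroneckerSplit ι X Y * kroneckerSplit ι X' Y' = kroneckerSplit ι (X * X') (Y * Y') := by
  simp only [kroneckerSplit, add_mul, mul_add, ← mul_kronecker_mul, centeringMatrix_mul_self,
    centeringMatrix_mul_avgMatrix, avgMatrix_mul_centeringMatrix, avgMatrix_mul_self,
    kronecker_zero, add_zero, zero_add]

theorem conjTranspose_kroneckerSplit [StarRing 𝕜] (X Y : Matrix m m 𝕜) :
    (kroneckerSplit ι X Y)ᴴ = kroneckerSplit ι Xᴴ Yᴴ := by
  rw [kroneckerSplit, kroneckerSplit, conjTranspose_add, conjTranspose_kronecker,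
    conjTranspose_kronecker, conjTranspose_centeringMatrix, conjTranspose_avgMatrix]

theorem kroneckerSplit_sub (X Y X' Y' : Matrix m m 𝕜) :
    kroneckerSplit ι (X - X') (Y - Y') = kroneckerSplit ι X Y - kroneckerSplit ι X' Y' := by
  ext ⟨i, p⟩ ⟨j, q⟩
  simp only [kroneckerSplit, Matrix.sub_apply, Matrix.add_apply, kroneckerMap_apply]
  ring

theorem kroneckerSplit_zero : kroneckerSplit ι (0 : Matrix m m 𝕜) 0 = 0 := by
  simp [kroneckerSplit]

theorem kroneckerSplit_one_centeringMatrix [Fintype m] [DecidableEq m] :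
    kroneckerSplit ι 1 (centeringMatrix m) = (centeringMatrix (m × ι) : Matrix _ _ 𝕜) := by
  ext ⟨i, p⟩ ⟨j, q⟩
  simp only [kroneckerSplit, centeringMatrix, avgMatrix_prod, Matrix.add_apply, Matrix.sub_apply,
    kroneckerMap_apply, one_apply, Prod.mk.injEq]
  split_ifs <;> simp_all <;> ring

theorem eq_zero_of_kroneckerSplit_eq_zero [Fintype m] [DecidableEq m] [CharZero 𝕜] [Nonempty ι]
    {X Y : Matrix m m 𝕜} (h : kroneckerSplit ι X Y = 0) : Y = 0 := by
  have hY : Y ⊗ₖ avgMatrix ι = 0 := by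
    have h' := congrArg (· * kroneckerSplit ι 0 1) h
    simp only [kroneckerSplit_mul_kroneckerSplit, zero_mul, mul_zero, mul_one] at h'
    simpa [kroneckerSplit] using h'
  ext i j
  obtain ⟨p⟩ := ‹Nonempty ι›
  simpa [avgMatrix] using congrFun (congrFun hY (i, p)) (j, p)

end KroneckerSplit

section Normal

variable {m ι 𝕜 : Type*} [Fintype m] [DecidableEq m] [Field 𝕜] [StarRing 𝕜]

theorem isNormalM_diagonal (d : m → 𝕜) : IsNormalM (diagonal d) := by
  rw [IsNormalM, star_eq_conjTranspose, diagonal_conjTranspose, diagonal_mul_diagonal,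
    diagonal_mul_diagonal]
  simp_rw [mul_comm]

theorem IsNormalM.of_smul {c : 𝕜} (hc : c ≠ 0) {M : Matrix m m 𝕜} (h : IsNormalM (c • M)) :
    IsNormalM M := by
  rw [IsNormalM, star_eq_conjTranspose, conjTranspose_smul, smul_mul_smul_comm,
    smul_mul_smul_comm, mul_comm c] at h
  exact smul_right_injective _ (mul_ne_zero (star_ne_zero.2 hc) hc) h

def IsCenteredNormal (M : Matrix m m 𝕜) : Prop :=
  centeringMatrix m * (Mᴴ * centeringMatrix m * M - M * centeringMatrix m * Mᴴ) *
    centeringMatrix m = 0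

theorem IsCenteredNormal.smul {M : Matrix m m 𝕜} (h : IsCenteredNormal M) (c : 𝕜) :
    IsCenteredNormal (c • M) := by
  have hsmul : (c • M)ᴴ * centeringMatrix m * (c • M) - c • M * centeringMatrix m * (c • M)ᴴ =
      (star c * c) • (Mᴴ * centeringMatrix m * M - M * centeringMatrix m * Mᴴ) := by
    simp only [conjTranspose_smul, Matrix.smul_mul, Matrix.mul_smul, smul_smul, smul_sub,
      mul_comm c]
  rw [IsCenteredNormal, hsmul, Matrix.mul_smul, Matrix.smul_mul, h, smul_zero]

variable [Fintype ι] [DecidableEq ι] [Nonempty ι] [CharZero 𝕜]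

theorem IsNormalM.of_kroneckerSplit {X Y : Matrix m m 𝕜} (h : IsNormalM (kroneckerSplit ι X Y)) :
    IsNormalM Y := by
  rw [IsNormalM, star_eq_conjTranspose, conjTranspose_kroneckerSplit,
    kroneckerSplit_mul_kroneckerSplit, kroneckerSplit_mul_kroneckerSplit, ← sub_eq_zero,
    ← kroneckerSplit_sub] at h
  exact sub_eq_zero.1 (eq_zero_of_kroneckerSplit_eq_zero h)

theorem IsCenteredNormal.kroneckerSplit {X Y : Matrix m m 𝕜} (hX : IsNormalM X)
    (hY : IsCenteredNormal Y) : IsCenteredNormal (kroneckerSplit ι X Y) := by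
  rw [IsNormalM, star_eq_conjTranspose] at hX
  rw [IsCenteredNormal] at hY ⊢
  rw [← kroneckerSplit_one_centeringMatrix, conjTranspose_kroneckerSplit]
  simp only [kroneckerSplit_mul_kroneckerSplit, ← kroneckerSplit_sub, mul_one, one_mul, hX,
    sub_self, hY, kroneckerSplit_zero]

end Normal

section Restrictor

variable {m k : Type*} [Fintype m] [Fintype k] [DecidableEq k] {Q : Matrix m k ℂ}

theorem conjTranspose_mul_mul_eq_zero_iff (hQ : Qᴴ * Q = 1) (X : Matrix m m ℂ) :
    Qᴴ * X * Q = 0 ↔ Q * Qᴴ * X * (Q * Qᴴ) = 0 := by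
  constructor
  · intro h
    rw [show Q * Qᴴ * X * (Q * Qᴴ) = Q * (Qᴴ * X * Q) * Qᴴ by simp only [Matrix.mul_assoc], h]
    simp
  · intro h
    calc Qᴴ * X * Q = Qᴴ * Q * (Qᴴ * X * Q) * (Qᴴ * Q) := by rw [hQ, one_mul, mul_one]
      _ = Qᴴ * (Q * Qᴴ * X * (Q * Qᴴ)) * Q := by simp only [Matrix.mul_assoc]
      _ = 0 := by rw [h]; simp

variable [DecidableEq m]

theorem IsRestrictor.mul_conjTranspose (hQ : IsRestrictor Q)
    (hcard : Fintype.card k + 1 = Fintype.card m) : Q * Qᴴ = centeringMatrix m := by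
  set e : Matrix m Unit ℂ := of fun _ _ => 1
  have hQe : Qᴴ * e = 0 := by
    ext a u
    simpa [e, mulVec, dotProduct, mul_apply] using congrFun hQ.2 a
  have heQ : eᴴ * Q = 0 := by
    simpa using congrArg conjTranspose hQe
  -- `[Q | e]` is square, and `[Qᴴ ; eᴴ / card m]` is a left inverse of it
  have hleft : fromRows Qᴴ ((Fintype.card m : ℂ)⁻¹ • eᴴ) * fromCols Q e = 1 := by
    rw [fromRows_mul_fromCols, hQ.1, hQe, Matrix.smul_mul, heQ, smul_zero, ← fromBlocks_one]
    have hm : (Fintype.card m : ℂ) ≠ 0 := Nat.cast_ne_zero.2 (by omega)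
    congr
    ext
    simp [e, mul_apply, hm]
  have hright := (fromCols_mul_fromRows_eq_one_comm
    (Fintype.equivOfCardEq (by simp [hcard])) _ _ _ _).2 hleft
  have havg : e * ((Fintype.card m : ℂ)⁻¹ • eᴴ) = avgMatrix m := by
    ext
    simp [e, avgMatrix, mul_apply]
  rw [fromCols_mul_fromRows, havg] at hright
  rw [centeringMatrix, ← hright, add_sub_cancel_right]

theorem isNormalM_conjTranspose_mul_mul_iff (hQ : IsRestrictor Q)
    (hcard : Fintype.card k + 1 = Fintype.card m) (M : Matrix m m ℂ) :
    IsNormalM (Qᴴ * M * Q) ↔ IsCenteredNormal M := by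
  rw [IsCenteredNormal, ← hQ.mul_conjTranspose hcard, ← conjTranspose_mul_mul_eq_zero_iff hQ.1,
    IsNormalM, star_eq_conjTranspose, ← sub_eq_zero]
  simp only [conjTranspose_mul, conjTranspose_conjTranspose, Matrix.mul_sub, Matrix.sub_mul,
    Matrix.mul_assoc]

end Restrictor

theorem lap_kronecker_map {m ι 𝕜 : Type*} [Fintype m] [DecidableEq m] [Fintype ι]
    [DecidableEq ι] [Field 𝕜] [CharZero 𝕜] [Algebra ℝ 𝕜] [Nonempty ι] (A : Matrix m m ℝ) :
    (lap (A ⊗ₖ of fun _ _ => (1 : ℝ) : Matrix (m × ι) (m × ι) ℝ)).map (algebraMap ℝ 𝕜) =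
      (Fintype.card ι : 𝕜) • kroneckerSplit ι (diagonal fun i => algebraMap ℝ 𝕜 (∑ j, A i j))
        ((lap A).map (algebraMap ℝ 𝕜)) := by
  have hι : (Fintype.card ι : 𝕜) ≠ 0 := Nat.cast_ne_zero.2 Fintype.card_ne_zero
  have hrow : ∀ i, ∑ x : m × ι, A i x.1 * 1 = Fintype.card ι * ∑ j, A i j := by
    intro i
    simp [Fintype.sum_prod_type, Finset.mul_sum]
  ext ⟨i, p⟩ ⟨j, q⟩
  simp only [lap, kroneckerSplit, centeringMatrix, avgMatrix, map_apply, Matrix.sub_apply,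
    Matrix.add_apply, Matrix.smul_apply, kroneckerMap_apply, diagonal_apply, one_apply, of_apply,
    hrow, Prod.mk.injEq, smul_eq_mul]
  split_ifs <;> simp_all <;> field_simp <;> ring

def IsDirectedJoin {V : Type*} [Fintype V] (A : Matrix V V ℝ) : Prop :=
  ∃ S : Finset V, S.Nonempty ∧ S ≠ Finset.univ ∧ ∀ u ∈ S, ∀ v ∉ S, A u v = 1 ∧ A v u = 0

theorem isDirectedJoin_kronecker_iff {m ι : Type*} [Fintype m] [DecidableEq m] [Fintype ι]
    [Nonempty ι] {A : Matrix m m ℝ} (hA : ∀ i, A i i = 0) :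
    IsDirectedJoin (A ⊗ₖ of fun _ _ => (1 : ℝ) : Matrix (m × ι) (m × ι) ℝ) ↔
      IsDirectedJoin A := by
  obtain ⟨p⟩ := ‹Nonempty ι›
  constructor
  · rintro ⟨T, hTne, hTuniv, hT⟩
    have hfibre : ∀ x ∈ T, ∀ q, (x.1, q) ∈ T := fun x hx q =>
      by_contra fun hq => by simpa [hA] using (hT x hx (x.1, q) hq).1
    have hmem : ∀ x, x ∈ T ↔ x.1 ∈ T.image Prod.fst := fun x =>
      ⟨Finset.mem_image_of_mem _, fun hx => by
        obtain ⟨y, hy, hyx⟩ := Finset.mem_image.1 hx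
        simpa [hyx] using hfibre y hy x.2⟩
    refine ⟨T.image Prod.fst, hTne.image _, fun h => hTuniv ?_, fun u hu v hv => ?_⟩
    · ext x
      simp [hmem x, h]
    · simpa using hT (u, p) ((hmem _).2 hu) (v, p) (mt (hmem _).1 hv)
  · rintro ⟨S, hSne, hSuniv, hS⟩
    refine ⟨S ×ˢ Finset.univ, hSne.product Finset.univ_nonempty, fun h => hSuniv ?_, ?_⟩
    · rw [Finset.eq_univ_iff_forall] at h ⊢
      exact fun i => (Finset.mem_product.1 (h (i, p))).1
    · rintro ⟨u, q⟩ hu ⟨v, r⟩ hv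
      simp only [Finset.mem_product, Finset.mem_univ, and_true] at hu hv
      simpa using hS u hu v hv

/-- If `Γ` is restricted-normal of order `n`, then for `k ≥ 1` the digraph
on `Fin n × Fin k` with adjacency matrix `A ⊗ J_k` is restricted-normal of order `nk`;
moreover, it is a directed join iff `Γ` is a directed join. -/
theorem restricted_normal_kronecker {n k : ℕ} (hk : 1 ≤ k)
    (A : Matrix (Fin n) (Fin n) ℝ) (hA : IsAdj A)
    (Q : Matrix (Fin n) (Fin (n - 1)) ℂ) (hQ : IsRestrictor Q)
    (hrn : IsNormalM (Qᴴ * lapC A * Q)) (hnn : ¬ IsNormalM (lap A))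
    (Ahat : Matrix (Fin n × Fin k) (Fin n × Fin k) ℝ)
    (hAhat : ∀ p q : Fin n × Fin k, Ahat p q = A p.1 q.1) :
    ¬ IsNormalM (lap Ahat) ∧
    (∀ Qhat : Matrix (Fin n × Fin k) (Fin (n * k - 1)) ℂ, IsRestrictor Qhat →
      IsNormalM (Qhatᴴ * lapC Ahat * Qhat)) ∧
    ((∃ S : Finset (Fin n × Fin k), S.Nonempty ∧ S ≠ Finset.univ ∧
        ∀ u ∈ S, ∀ v ∉ S, Ahat u v = 1 ∧ Ahat v u = 0) ↔
      (∃ S : Finset (Fin n), S.Nonempty ∧ S ≠ Finset.univ ∧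
        ∀ u ∈ S, ∀ v ∉ S, A u v = 1 ∧ A v u = 0)) := by
  obtain rfl : Ahat = A ⊗ₖ of fun _ _ => 1 := by
    ext p q
    simp [hAhat]
  have : NeZero k := ⟨by omega⟩
  have hn : n ≠ 0 := by
    rintro rfl
    exact hnn (Subsingleton.elim _ _)
  have hk0 : (k : ℝ) ≠ 0 := by exact_mod_cast NeZero.ne k
  have hnk : 0 < n * k := by positivity
  refine ⟨fun h => hnn ?_, fun Qhat hQhat => ?_, isDirectedJoin_kronecker_iff hA.2⟩
  · have hlap := lap_kronecker_map (𝕜 := ℝ) (ι := Fin k) A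
    simp only [Algebra.algebraMap_self, RingHom.coe_id, map_id, Fintype.card_fin] at hlap
    rw [hlap] at h
    exact (h.of_smul hk0).of_kroneckerSplit
  · rw [lapC, ← Complex.coe_algebraMap,
      isNormalM_conjTranspose_mul_mul_iff hQ (by simp; omega)] at hrn
    rw [lapC, ← Complex.coe_algebraMap, lap_kronecker_map,
      isNormalM_conjTranspose_mul_mul_iff hQhat (by simp; omega)]
    exact (IsCenteredNormal.kroneckerSplit (isNormalM_diagonal _) hrn).smul _
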